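/- arXiv:1803.05421 — 6 statements merged into one kernel-verified Lean document; each statement's English description precedes it below -/
import Mathlib

section
/- With d_f as above, the 'four-point inequality' holds: for all s,t,u,v ∈ [0,m], d_f(s,t) + d_f(u,v) ≤ max( d_f(s,u) + d_f(t,v), d_f(s,v) + d_f(t,u) ). Consequently the quotient metric space ([0,m]/∼_f, d_f) is 0-hyperbolic. -/
/-!
With `M = treeMinf f`, the four-point inequality for `d_f` reduces to
`min (M s u + M t v) (M s v + M t u) ≤ M s t + M u v`, since the values of `f` cancel.
Because `f` attains its minimum on intervals, `M` satisfies the ultrametric-type inequality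
`min (M a b) (M b c) ≤ M a c` (the interval between `a` and `c` is covered by the other two), and
any symmetric function with that property satisfies the four-point inequality.
-/

open Set

noncomputable def treeMinf (f : ℝ → ℝ) (s t : ℝ) : ℝ :=
  sInf (f '' Icc (min s t) (max s t))

noncomputable def treeDist (f : ℝ → ℝ) (s t : ℝ) : ℝ :=
  f s + f t - 2 * treeMinf f s t

lemma treeMinf_eq_sInf_uIcc (f : ℝ → ℝ) (s t : ℝ) : treeMinf f s t = sInf (f '' uIcc s t) :=
  rfl

lemma treeMinf_comm (f : ℝ → ℝ) (s t : ℝ) : treeMinf f s t = treeMinf f t s := by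
  rw [treeMinf_eq_sInf_uIcc, treeMinf_eq_sInf_uIcc, uIcc_comm]

lemma treeMinf_eq_of_isMinOn {f : ℝ → ℝ} {s t r : ℝ} (hr : r ∈ uIcc s t)
    (hmin : IsMinOn f (uIcc s t) r) : treeMinf f s t = f r :=
  IsLeast.csInf_eq ⟨mem_image_of_mem f hr, by rintro _ ⟨x, hx, rfl⟩; exact hmin hx⟩

lemma treeMinf_le_of_isMinOn {f : ℝ → ℝ} {s t r x : ℝ} (hr : r ∈ uIcc s t)
    (hmin : IsMinOn f (uIcc s t) r) (hx : x ∈ uIcc s t) : treeMinf f s t ≤ f x :=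
  (treeMinf_eq_of_isMinOn hr hmin).trans_le (hmin hx)

lemma min_treeMinf_le_treeMinf {f : ℝ → ℝ} {a b c : ℝ}
    (hab : ∃ r ∈ uIcc a b, IsMinOn f (uIcc a b) r) (hbc : ∃ r ∈ uIcc b c, IsMinOn f (uIcc b c) r)
    (hac : ∃ r ∈ uIcc a c, IsMinOn f (uIcc a c) r) :
    min (treeMinf f a b) (treeMinf f b c) ≤ treeMinf f a c := by
  obtain ⟨r, hr, hmin⟩ := hac
  rw [treeMinf_eq_of_isMinOn hr hmin]
  obtain ⟨r₁, hr₁, hmin₁⟩ := hab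
  obtain ⟨r₂, hr₂, hmin₂⟩ := hbc
  rcases uIcc_subset_uIcc_union_uIcc hr with hr | hr
  · exact (min_le_left _ _).trans (treeMinf_le_of_isMinOn hr₁ hmin₁ hr)
  · exact (min_le_right _ _).trans (treeMinf_le_of_isMinOn hr₂ hmin₂ hr)

lemma min_add_min_le_of_min_le {a b c d p q : ℝ} (hp₁ : min a d ≤ p) (hp₂ : min c b ≤ p)
    (hq₁ : min a c ≤ q) (hq₂ : min d b ≤ q) : min (a + b) (c + d) ≤ p + q := by
  grind

lemma four_point_of_min_le {α : Type*} {S : Set α} {M : α → α → ℝ} (hsymm : ∀ x y, M x y = M y x)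
    (hult : ∀ x ∈ S, ∀ y ∈ S, ∀ z ∈ S, min (M x y) (M y z) ≤ M x z)
    {s t u v : α} (hs : s ∈ S) (ht : t ∈ S) (hu : u ∈ S) (hv : v ∈ S) :
    min (M s u + M t v) (M s v + M t u) ≤ M s t + M u v := by
  have hstu := hult s hs u hu t ht
  have hsvt := hult s hs v hv t ht
  have husv := hult u hu s hs v hv
  have hutv := hult u hu t ht v hv
  rw [hsymm u t] at hstu hutv
  rw [hsymm v t] at hsvt
  rw [hsymm u s] at husv
  exact min_add_min_le_of_min_le hstu hsvt husv hutv

theorem treeDist_four_point_general (f : ℝ → ℝ) (m : ℝ)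
    (hattain : ∀ a b : ℝ, 0 ≤ a → a ≤ b → b ≤ m →
      ∃ r ∈ Icc a b, ∀ x ∈ Icc a b, f r ≤ f x) :
    ∀ s ∈ Icc 0 m, ∀ t ∈ Icc 0 m, ∀ u ∈ Icc 0 m, ∀ v ∈ Icc 0 m,
      treeDist f s t + treeDist f u v ≤
        max (treeDist f s u + treeDist f t v) (treeDist f s v + treeDist f t u) := by
  intro s hs t ht u hu v hv
  have hmin : ∀ a ∈ Icc 0 m, ∀ b ∈ Icc 0 m, ∃ r ∈ uIcc a b, IsMinOn f (uIcc a b) r :=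
    fun a ha b hb ↦ hattain _ _ (le_min ha.1 hb.1) min_le_max (max_le ha.2 hb.2)
  have hkey := four_point_of_min_le (treeMinf_comm f)
    (fun a ha b hb c hc ↦ min_treeMinf_le_treeMinf (hmin a ha b hb) (hmin b hb c hc)
      (hmin a ha c hc)) hs ht hu hv
  unfold treeDist
  rcases le_total (treeMinf f s u + treeMinf f t v) (treeMinf f s v + treeMinf f t u) with h | h
  · rw [min_eq_left h] at hkey
    exact le_max_of_le_left (by linarith)
  · rw [min_eq_right h] at hkey
    exact le_max_of_le_right (by linarith)

/-- The four-point inequality for `d_f`: for all `s,t,u,v ∈ [0,m]`,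
`d_f(s,t) + d_f(u,v) ≤ max (d_f(s,u) + d_f(t,v)) (d_f(s,v) + d_f(t,u))`,
i.e. the (quotient by `d_f = 0` of the) pseudometric space `([0,m], d_f)` is 0-hyperbolic. -/
theorem treeDist_four_point (f : ℝ → ℝ) (m : ℝ) (hm : 0 ≤ m)
    (hpos : ∀ x ∈ Icc 0 m, 0 ≤ f x) (hfm : f m = 0)
    (hattain : ∀ a b : ℝ, 0 ≤ a → a ≤ b → b ≤ m →
      ∃ r ∈ Icc a b, ∀ x ∈ Icc a b, f r ≤ f x) :
    ∀ s ∈ Icc 0 m, ∀ t ∈ Icc 0 m, ∀ u ∈ Icc 0 m, ∀ v ∈ Icc 0 m,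
      treeDist f s t + treeDist f u v ≤
        max (treeDist f s u + treeDist f t v) (treeDist f s v + treeDist f t u) :=
  treeDist_four_point_general f m hattain
end

section
/- In the tree τ_f coded by f, with root ρ = [m]_f and genealogical order σ₁ ⪯ σ₂ iff σ₁ lies on the geodesic from ρ to σ₂, one has: for σᵢ = [tᵢ]_f, σ₁ ⪯ σ₂ if and only if m_f(t₁,t₂) = f(t₁). -/
open Set

lemma treeMinf_eq_left {f : ℝ → ℝ} {s t : ℝ}
    (hmin : ∀ x ∈ Icc (min s t) (max s t), f s ≤ f x) : treeMinf f s t = f s := by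
  refine IsLeast.csInf_eq ⟨mem_image_of_mem f ⟨min_le_left s t, le_max_left s t⟩, ?_⟩
  rintro _ ⟨x, hx, rfl⟩
  exact hmin x hx

lemma treeDist_eq_sub_of_left_min {f : ℝ → ℝ} {s t : ℝ}
    (hmin : ∀ x ∈ Icc (min s t) (max s t), f s ≤ f x) : treeDist f s t = f t - f s := by
  rw [treeDist, treeMinf_eq_left hmin]
  ring

lemma treeDist_root {f : ℝ → ℝ} {m t : ℝ} (hpos : ∀ x ∈ Icc 0 m, 0 ≤ f x) (hfm : f m = 0)
    (ht : t ∈ Icc 0 m) : treeDist f m t = f t := by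
  have hmin : ∀ x ∈ Icc (min m t) (max m t), f m ≤ f x := by
    rw [min_eq_right ht.2, max_eq_left ht.2, hfm]
    exact fun x hx => hpos x ⟨ht.1.trans hx.1, hx.2⟩
  rw [treeDist_eq_sub_of_left_min hmin, hfm, sub_zero]

/-- `d_f(m,t₁) + d_f(t₁,t₂) = d_f(m,t₂)` is the metric characterization of
`[t₁]_f ⪯ [t₂]_f` in a real tree rooted at `[m]_f`. -/
theorem treeDist_genealogical_order_general (f : ℝ → ℝ) (m : ℝ)
    (hpos : ∀ x ∈ Icc 0 m, 0 ≤ f x) (hfm : f m = 0)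
    (t₁ : ℝ) (ht₁ : t₁ ∈ Icc 0 m) (t₂ : ℝ) (ht₂ : t₂ ∈ Icc 0 m) :
    (treeDist f m t₁ + treeDist f t₁ t₂ = treeDist f m t₂) ↔ treeMinf f t₁ t₂ = f t₁ := by
  rw [treeDist_root hpos hfm ht₁, treeDist_root hpos hfm ht₂, treeDist]
  constructor <;> intro h <;> linarith

/-- In the tree coded by `f`, rooted at `ρ = [m]_f`, the class `[t₁]_f` lies on the geodesic
from the root to `[t₂]_f` (equivalently, `d_f(m,t₁) + d_f(t₁,t₂) = d_f(m,t₂)`, the metric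
characterization of `σ₁ ⪯ σ₂` in a real tree) if and only if `m_f(t₁,t₂) = f(t₁)`. -/
theorem treeDist_genealogical_order (f : ℝ → ℝ) (m : ℝ) (hm : 0 ≤ m)
    (hpos : ∀ x ∈ Icc 0 m, 0 ≤ f x) (hfm : f m = 0)
    (hattain : ∀ a b : ℝ, 0 ≤ a → a ≤ b → b ≤ m →
      ∃ r ∈ Icc a b, ∀ x ∈ Icc a b, f r ≤ f x)
    (t₁ : ℝ) (ht₁ : t₁ ∈ Icc 0 m) (t₂ : ℝ) (ht₂ : t₂ ∈ Icc 0 m) :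
    (treeDist f m t₁ + treeDist f t₁ t₂ = treeDist f m t₂) ↔ treeMinf f t₁ t₂ = f t₁ :=
  treeDist_genealogical_order_general f m hpos hfm t₁ ht₁ t₂ ht₂
end

section
/- Let Z be a Galton-Watson process with offspring distribution p = (p_k)_{k≥0}, started at 1, and let Θ be the associated Galton-Watson tree. Then Θ is finite almost surely if and only if p is (sub)critical, i.e. Σ_k k p_k ≤ 1 (excluding the degenerate case p₁ = 1). -/
/-!
Let `q n` be the probability that the tree has no vertex at depth `n`. The root has `k`
children with probability `p k`, and the subtrees of the children are independent copies of
the whole tree, so `q (n + 1) = f (q n)` with `f x = ∑ p k x ^ k` the generating function; by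
Kleene's theorem the extinction probability `⨆ n, q n` is the least fixed point of `f`.
Write `1 - f x = (1 - x) s x`, where `s x = ∑ p k (1 + x + ⋯ + x ^ (k - 1))` increases to the
mean `m` as `x → 1`. If `m ≤ 1` and `p 1 ≠ 1` then `s x < 1`, hence `x < f x`, for all `x < 1`,
so the least fixed point is `1`; if `m > 1` then `f x < x` for some `x < 1`, which bounds the
least fixed point by `x`.
-/

open MeasureTheory ProbabilityTheory

/-- The Galton–Watson tree built from the iid offspring counts `(χ_u)`:
`u ∈ Θ(ω)` iff for every `i < |u|`, the letter `u_i` satisfies `1 ≤ u_i ≤ χ_{u_1⋯u_{i-1}}(ω)`. -/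
def gwTree {Ω : Type*} (χ : List ℕ → Ω → ℕ) (ω : Ω) : Set (List ℕ) :=
  {u | ∀ i < u.length, 1 ≤ u.getD i 0 ∧ u.getD i 0 ≤ χ (u.take i) ω}

open OmegaCompletePartialOrder
open scoped ENNReal Topology

theorem ProbabilityTheory.iIndep.biSup_of_pairwise_disjoint {ι κ Ω : Type*}
    {mΩ : MeasurableSpace Ω} {μ : Measure Ω} {m : ι → MeasurableSpace Ω}
    (h_le : ∀ i, m i ≤ mΩ) (h_indep : iIndep m μ) {T : κ → Set ι}
    (hT : Pairwise (Function.onFun Disjoint T)) :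
    iIndep (fun k => ⨆ i ∈ T k, m i) μ := by
  classical
  have := h_indep.isProbabilityMeasure
  refine (iIndep_iff _ μ).2 fun s => ?_
  induction s using Finset.induction_on with
  | empty => simp
  | insert a s ha ih =>
    intro f hf
    rw [Finset.set_biInter_insert, Finset.prod_insert ha,
      ← ih fun k hk => hf k (Finset.mem_insert_of_mem hk)]
    have hdisj : Disjoint (T a) (⋃ k ∈ s, T k) :=
      Set.disjoint_iUnion₂_right.2 fun k hk => hT (ne_of_mem_of_not_mem hk ha).symm
    refine (Indep_iff _ _ μ).1 (indep_iSup_of_disjoint h_le h_indep hdisj) _ _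
      (hf a (Finset.mem_insert_self a s)) (.biInter (Finset.countable_toSet s) fun k hk => ?_)
    have hle : ⨆ i ∈ T k, m i ≤ ⨆ i ∈ ⋃ k ∈ s, T k, m i :=
      biSup_mono fun i hi => Set.mem_biUnion hk hi
    exact hle _ (hf k (Finset.mem_insert_of_mem hk))

namespace GaltonWatson

section Tree

variable {Ω : Type*} {χ : List ℕ → Ω → ℕ} {ω : Ω}

theorem nil_mem_gwTree : [] ∈ gwTree χ ω := fun _ hi => absurd hi (Nat.not_lt_zero _)

theorem cons_mem_gwTree {a : ℕ} {v : List ℕ} :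
    a :: v ∈ gwTree χ ω ↔ a ∈ Finset.Icc 1 (χ [] ω) ∧ v ∈ gwTree (fun u => χ (a :: u)) ω := by
  simp only [gwTree, Set.mem_ofPred_eq, Finset.mem_Icc, List.length_cons,
    Nat.forall_lt_succ_left, List.getD_cons_zero, List.take_zero, List.getD_cons_succ,
    List.take_succ_cons]

theorem gwTree_subset_insert_biUnion : gwTree χ ω ⊆ insert []
    (⋃ j ∈ Finset.Icc 1 (χ [] ω), List.cons j '' gwTree (fun u => χ (j :: u)) ω) := by
  rintro (_ | ⟨a, v⟩) hu
  · exact Set.mem_insert _ _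
  · obtain ⟨ha, hv⟩ := cons_mem_gwTree.1 hu
    exact Set.mem_insert_of_mem _ (Set.mem_biUnion ha (Set.mem_image_of_mem _ hv))

def extinctBy (χ : List ℕ → Ω → ℕ) (n : ℕ) : Set Ω :=
  {ω | ∀ u ∈ gwTree χ ω, u.length < n}

theorem extinctBy_zero : extinctBy χ 0 = ∅ :=
  Set.eq_empty_of_forall_notMem fun _ h => Nat.not_lt_zero _ (h [] nil_mem_gwTree)

theorem extinctBy_mono : Monotone (extinctBy χ) :=
  fun _ _ hmn _ h u hu => (h u hu).trans_le hmn

theorem mem_extinctBy_succ {n : ℕ} : ω ∈ extinctBy χ (n + 1) ↔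
    ∀ j ∈ Finset.Icc 1 (χ [] ω), ω ∈ extinctBy (fun u => χ (j :: u)) n := by
  refine ⟨fun h j hj v hv => ?_, fun h => ?_⟩
  · exact Nat.succ_lt_succ_iff.1 (h (j :: v) (cons_mem_gwTree.2 ⟨hj, hv⟩))
  · rintro (_ | ⟨a, v⟩) hu
    · exact Nat.succ_pos n
    · obtain ⟨ha, hv⟩ := cons_mem_gwTree.1 hu
      exact Nat.succ_lt_succ (h a ha v hv)

theorem finite_gwTree_of_mem_extinctBy {n : ℕ} (h : ω ∈ extinctBy χ n) :
    (gwTree χ ω).Finite := by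
  induction n generalizing χ with
  | zero => simp [extinctBy_zero] at h
  | succ n ih =>
    refine .subset (.insert _ (.biUnion (Finset.finite_toSet _) fun j hj => (ih ?_).image _))
      gwTree_subset_insert_biUnion
    exact mem_extinctBy_succ.1 h j hj

theorem finite_gwTree_iff : (gwTree χ ω).Finite ↔ ∃ n, ω ∈ extinctBy χ n := by
  refine ⟨fun h => ?_, fun ⟨n, hn⟩ => finite_gwTree_of_mem_extinctBy hn⟩
  obtain ⟨N, hN⟩ := (h.image List.length).bddAbove
  exact ⟨N + 1, fun u hu => Nat.lt_succ_of_le (hN (Set.mem_image_of_mem _ hu))⟩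

theorem measurableSet_extinctBy {mΩ : MeasurableSpace Ω} (hχ : ∀ u, Measurable (χ u))
    (n : ℕ) : MeasurableSet (extinctBy χ n) := by
  induction n generalizing χ with
  | zero => simp [extinctBy_zero]
  | succ n ih =>
    have : extinctBy χ (n + 1) =
        ⋂ j, {ω | j ∈ Finset.Icc 1 (χ [] ω) → ω ∈ extinctBy (fun u => χ (j :: u)) n} := by
      ext ω
      simp only [mem_extinctBy_succ, Set.mem_iInter, Set.mem_ofPred_eq]
    rw [this]
    exact .iInter fun j =>
      .imp (hχ [] (.of_discrete (s := {k | j ∈ Finset.Icc 1 k}))) (ih fun u => hχ _)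

end Tree

section GeneratingFunction

variable (p : PMF ℕ)

noncomputable def pgf (x : ℝ≥0∞) : ℝ≥0∞ := ∑' k, p k * x ^ k

/-- The difference quotient `(1 - pgf p x) / (1 - x)`, written without division. -/
noncomputable def pgfSlope (x : ℝ≥0∞) : ℝ≥0∞ := ∑' k, p k * ∑ i ∈ Finset.range k, x ^ i

theorem pgf_one : pgf p 1 = 1 := by simp [pgf, p.tsum_coe]

theorem monotone_pgf : Monotone (pgf p) := fun _ _ hxy =>
  ENNReal.tsum_le_tsum fun k => by gcongr

theorem ωScottContinuous_pgf : ωScottContinuous (pgf p) := by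
  refine ωScottContinuous.of_monotone_map_ωSup ⟨monotone_pgf p, fun c => ?_⟩
  change ∑' k, p k * (⨆ n, c n) ^ k = ⨆ n, ∑' k, p k * c n ^ k
  have hmono : ∀ k, Monotone fun n => p k * c n ^ k := fun k _ _ hmn => by dsimp only; gcongr
  simp_rw [ENNReal.iSup_pow, ENNReal.mul_iSup, ENNReal.tsum_eq_iSup_sum,
    ENNReal.finsetSum_iSup_of_monotone hmono]
  exact iSup_comm

noncomputable def pgfHom : ℝ≥0∞ →o ℝ≥0∞ := ⟨pgf p, monotone_pgf p⟩

theorem lfp_pgfHom_eq_iSup_iterate : (pgfHom p).lfp = ⨆ n, (pgf p)^[n] 0 :=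
  fixedPoints.lfp_eq_sSup_iterate _ (ωScottContinuous_pgf p)

variable {p}

theorem pow_add_mul_geom_sum {x : ℝ≥0∞} (hx : x ≤ 1) (k : ℕ) :
    x ^ k + (1 - x) * ∑ i ∈ Finset.range k, x ^ i = 1 := by
  induction k with
  | zero => simp
  | succ k ih =>
    calc x ^ (k + 1) + (1 - x) * ∑ i ∈ Finset.range (k + 1), x ^ i
        = x ^ k * (x + (1 - x)) + (1 - x) * ∑ i ∈ Finset.range k, x ^ i := by
          rw [Finset.sum_range_succ]; ring
      _ = 1 := by rw [add_tsub_cancel_of_le hx, mul_one, ih]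

theorem pgf_add_mul_pgfSlope {x : ℝ≥0∞} (hx : x ≤ 1) :
    pgf p x + (1 - x) * pgfSlope p x = 1 := by
  rw [pgf, pgfSlope, ← ENNReal.tsum_mul_left, ← ENNReal.tsum_add]
  refine (tsum_congr fun k => ?_).trans p.tsum_coe
  rw [mul_left_comm, ← mul_add, pow_add_mul_geom_sum hx, mul_one]

theorem geom_sum_le_card {x : ℝ≥0∞} (hx : x ≤ 1) (k : ℕ) :
    ∑ i ∈ Finset.range k, x ^ i ≤ k := by
  simpa using Finset.sum_le_sum fun i (_ : i ∈ Finset.range k) => pow_le_one₀ zero_le hx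

theorem geom_sum_lt_card {x : ℝ≥0∞} (hx : x < 1) {k : ℕ} (hk : 2 ≤ k) :
    ∑ i ∈ Finset.range k, x ^ i < k := by
  obtain ⟨j, rfl⟩ := Nat.exists_eq_add_of_le' hk
  have hle := geom_sum_le_card hx.le (j + 1)
  calc ∑ i ∈ Finset.range (j + 2), x ^ i
      = ∑ i ∈ Finset.range (j + 1), x ^ i + x ^ (j + 1) := Finset.sum_range_succ _ _
    _ < ((j + 1 : ℕ) : ℝ≥0∞) + 1 := ENNReal.add_lt_add_of_le_of_lt
        (ne_top_of_le_ne_top (ENNReal.natCast_ne_top _) hle) hle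
        (pow_lt_one₀ zero_le hx (Nat.succ_ne_zero j))
    _ = ((j + 2 : ℕ) : ℝ≥0∞) := by push_cast; ring

theorem pgfSlope_le_mean {x : ℝ≥0∞} (hx : x ≤ 1) :
    pgfSlope p x ≤ ∑' k : ℕ, (k : ℝ≥0∞) * p k :=
  ENNReal.tsum_le_tsum fun k => by rw [mul_comm (k : ℝ≥0∞)]; gcongr; exact geom_sum_le_card hx k

theorem pgfSlope_lt_one (hm : ∑' k : ℕ, (k : ℝ≥0∞) * p k ≤ 1) (hp1 : p 1 ≠ 1) {x : ℝ≥0∞}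
    (hx : x < 1) : pgfSlope p x < 1 := by
  by_cases hbranch : ∃ k, 2 ≤ k ∧ p k ≠ 0
  · obtain ⟨k, hk, hpk⟩ := hbranch
    refine lt_of_lt_of_le (ENNReal.tsum_lt_tsum (i := k) ?_ ?_ ?_) hm
    · exact ne_top_of_le_ne_top ENNReal.one_ne_top ((pgfSlope_le_mean hx.le).trans hm)
    · exact fun j => by rw [mul_comm (j : ℝ≥0∞)]; gcongr; exact geom_sum_le_card hx.le j
    · rw [mul_comm (k : ℝ≥0∞)]
      exact ENNReal.mul_lt_mul_right hpk (p.apply_ne_top k) (geom_sum_lt_card hx hk)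
  · push Not at hbranch
    have hslope : pgfSlope p x = p 1 := by
      rw [pgfSlope, tsum_eq_single 1 fun k hk => ?_]
      · simp
      · rcases Nat.lt_or_ge k 2 with hk2 | hk2
        · obtain rfl : k = 0 := by omega
          simp
        · simp [hbranch k hk2]
    rw [hslope]
    exact lt_of_le_of_ne (p.coe_le_one 1) hp1

theorem lt_pgf_of_pgfSlope_lt_one {x : ℝ≥0∞} (hx : x < 1) (h : pgfSlope p x < 1) :
    x < pgf p x := by
  by_contra! hle
  have hx1 : (1 : ℝ≥0∞) - x ≠ 0 := (tsub_pos_of_lt hx).ne'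
  have : pgf p x + (1 - x) * pgfSlope p x < x + (1 - x) * 1 :=
    ENNReal.add_lt_add_of_le_of_lt (ne_top_of_le_ne_top (hx.trans ENNReal.one_lt_top).ne hle) hle
      (ENNReal.mul_lt_mul_right hx1 (ENNReal.sub_ne_top ENNReal.one_ne_top) h)
  rw [pgf_add_mul_pgfSlope hx.le, mul_one, add_tsub_cancel_of_le hx.le] at this
  exact lt_irrefl 1 this

theorem pgf_lt_of_one_lt_pgfSlope {x : ℝ≥0∞} (hx : x < 1) (h : 1 < pgfSlope p x) :
    pgf p x < x := by
  by_contra! hle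
  have hx1 : (1 : ℝ≥0∞) - x ≠ 0 := (tsub_pos_of_lt hx).ne'
  have : x + (1 - x) * 1 < pgf p x + (1 - x) * pgfSlope p x :=
    ENNReal.add_lt_add_of_le_of_lt (hx.trans ENNReal.one_lt_top).ne hle
      (ENNReal.mul_lt_mul_right hx1 (ENNReal.sub_ne_top ENNReal.one_ne_top) h)
  rw [pgf_add_mul_pgfSlope hx.le, mul_one, add_tsub_cancel_of_le hx.le] at this
  exact lt_irrefl 1 this

theorem exists_one_lt_pgfSlope (hm : 1 < ∑' k : ℕ, (k : ℝ≥0∞) * p k) :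
    ∃ x < 1, 1 < pgfSlope p x := by
  obtain ⟨F, hF⟩ := lt_iSup_iff.1 (ENNReal.tsum_eq_iSup_sum ▸ hm)
  set g : ℝ≥0∞ → ℝ≥0∞ := fun x => ∑ k ∈ F, p k * ∑ i ∈ Finset.range k, x ^ i
  have hg : Continuous g := continuous_finsetSum _ fun k _ =>
    (ENNReal.continuous_const_mul (p.apply_ne_top k)).comp
      (continuous_finsetSum _ fun i _ => ENNReal.continuous_pow i)
  have hg1 : 1 < g 1 := by simpa [g, mul_comm] using hF
  have : (𝓝[<] (1 : ℝ≥0∞)).NeBot := ENNReal.nhdsLT_neBot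
  obtain ⟨x, hgx, hx⟩ := (((hg.tendsto 1).eventually (lt_mem_nhds hg1)).filter_mono
    nhdsWithin_le_nhds |>.and (self_mem_nhdsWithin (s := Set.Iio 1))).exists
  exact ⟨x, hx, hgx.trans_le (ENNReal.sum_le_tsum F)⟩

theorem lfp_pgfHom_eq_one_iff (hp1 : p 1 ≠ 1) :
    (pgfHom p).lfp = 1 ↔ ∑' k : ℕ, (k : ℝ≥0∞) * p k ≤ 1 := by
  refine ⟨fun hq => ?_, fun hm => ?_⟩
  · by_contra! hm
    obtain ⟨x, hx, hslope⟩ := exists_one_lt_pgfSlope hm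
    have : (pgfHom p).lfp ≤ x := OrderHom.lfp_le _ (pgf_lt_of_one_lt_pgfSlope hx hslope).le
    exact (hq ▸ this).not_gt hx
  · refine (OrderHom.lfp_le_fixed _ (pgf_one p)).eq_or_lt.resolve_right fun hlt => ?_
    exact (lt_pgf_of_pgfSlope_lt_one hlt (pgfSlope_lt_one hm hp1 hlt)).ne
      (OrderHom.map_lfp _).symm

end GeneratingFunction

section Branching

variable {Ω : Type*} {mΩ : MeasurableSpace Ω} {μ : Measure Ω} {χ : List ℕ → Ω → ℕ}

theorem measure_extinctBy_succ (hmeas : ∀ u, Measurable (χ u)) (hindep : iIndepFun χ μ)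
    (n : ℕ) : μ (extinctBy χ (n + 1)) =
      ∑' k, μ (χ [] ⁻¹' {k}) * ∏ j ∈ Finset.Icc 1 k, μ (extinctBy (fun u => χ (j :: u)) n) := by
  set E : ℕ → Set Ω := fun j => extinctBy (fun u => χ (j :: u)) n
  -- group the vertices by their first letter: the root (`none`) and the subtrees `j :: _`
  set m : Option ℕ → MeasurableSpace Ω := fun a =>
    ⨆ u ∈ {u : List ℕ | u.head? = a}, MeasurableSpace.comap (χ u) inferInstance
  have hle : ∀ a u, u.head? = a → MeasurableSpace.comap (χ u) inferInstance ≤ m a :=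
    fun a u hu => le_iSup₂ (f := fun u (_ : u ∈ {u : List ℕ | u.head? = a}) =>
      MeasurableSpace.comap (χ u) inferInstance) u hu
  have hmeas_root : ∀ k, MeasurableSet[m none] (χ [] ⁻¹' {k}) := fun k =>
    hle none [] rfl _ ⟨{k}, measurableSet_singleton k, rfl⟩
  have hmeas_sub : ∀ j, MeasurableSet[m (some j)] (E j) := fun j =>
    measurableSet_extinctBy (fun u => Measurable.of_comap_le (hle _ (j :: u) rfl)) n
  have hgroups : iIndep m μ :=
    hindep.iIndep.biSup_of_pairwise_disjoint (fun u => (hmeas u).comap_le)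
      fun a b hab => Set.disjoint_left.2 fun u ha hb => hab (ha.symm.trans hb)
  have hfactor : ∀ k, μ (χ [] ⁻¹' {k} ∩ ⋂ j ∈ Finset.Icc 1 k, E j) =
      μ (χ [] ⁻¹' {k}) * ∏ j ∈ Finset.Icc 1 k, μ (E j) := by
    intro k
    have := hgroups.meas_biInter (S := Finset.insertNone (Finset.Icc 1 k))
      (s := fun a => a.elim (χ [] ⁻¹' {k}) E) (by rintro (_ | j) - <;> simp [hmeas_root, hmeas_sub])
    simp only [Finset.prod_insertNone, Option.elim] at this
    rw [← this]
    congr 1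
    ext ω
    simp [Option.forall]
  have hdecomp : extinctBy χ (n + 1) = ⋃ k, χ [] ⁻¹' {k} ∩ ⋂ j ∈ Finset.Icc 1 k, E j := by
    ext ω
    simp [mem_extinctBy_succ, E]
  rw [hdecomp, measure_iUnion, tsum_congr hfactor]
  · exact fun a b hab => Set.disjoint_left.2 fun ω ha hb => hab (ha.1.symm.trans hb.1)
  · exact fun k => (hmeas [] (measurableSet_singleton k)).inter
      (.biInter (Finset.countable_toSet _) fun j _ => measurableSet_extinctBy (fun u => hmeas _) n)

theorem measure_extinctBy {p : PMF ℕ} (hmeas : ∀ u, Measurable (χ u)) (hindep : iIndepFun χ μ)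
    (hdist : ∀ u, μ.map (χ u) = p.toMeasure) (n : ℕ) :
    μ (extinctBy χ n) = (pgf p)^[n] 0 := by
  induction n generalizing χ with
  | zero => simp [extinctBy_zero]
  | succ n ih =>
    have hroot : ∀ k, μ (χ [] ⁻¹' {k}) = p k := fun k => by
      rw [← Measure.map_apply (hmeas []) (measurableSet_singleton k), hdist,
        PMF.toMeasure_apply_singleton _ _ (measurableSet_singleton k)]
    have hsub : ∀ j, μ (extinctBy (fun u => χ (j :: u)) n) = (pgf p)^[n] 0 := fun j =>
      ih (fun u => hmeas _) (hindep.precomp List.cons_injective) fun u => hdist _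
    rw [measure_extinctBy_succ hmeas hindep, Function.iterate_succ_apply', pgf]
    simp [hroot, hsub]

theorem measure_finite_gwTree {p : PMF ℕ} (hmeas : ∀ u, Measurable (χ u))
    (hindep : iIndepFun χ μ) (hdist : ∀ u, μ.map (χ u) = p.toMeasure) :
    μ {ω | (gwTree χ ω).Finite} = (pgfHom p).lfp := by
  have : {ω | (gwTree χ ω).Finite} = ⋃ n, extinctBy χ n := by
    ext ω
    simp [finite_gwTree_iff]
  rw [this, extinctBy_mono.measure_iUnion, lfp_pgfHom_eq_iSup_iterate]
  exact iSup_congr (measure_extinctBy hmeas hindep hdist)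

end Branching

end GaltonWatson

theorem gwTree_finite_iff_subcritical_general {Ω : Type*} [MeasureSpace Ω]
    (p : PMF ℕ) (χ : List ℕ → Ω → ℕ)
    (hmeas : ∀ u, Measurable (χ u))
    (hindep : iIndepFun χ ℙ)
    (hdist : ∀ u, Measure.map (χ u) ℙ = p.toMeasure)
    (hp1 : p 1 ≠ 1) :
    ℙ {ω | (gwTree χ ω).Finite} = 1 ↔ ∑' k : ℕ, (k : ENNReal) * p k ≤ 1 := by
  rw [GaltonWatson.measure_finite_gwTree hmeas hindep hdist,
    GaltonWatson.lfp_pgfHom_eq_one_iff hp1]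

/-- Extinction criterion: the Galton–Watson tree with offspring distribution `p`
(with `p 1 ≠ 1`) is finite almost surely iff `∑ k, k * p k ≤ 1`. -/
theorem gwTree_finite_iff_subcritical {Ω : Type*} [MeasureSpace Ω]
    [IsProbabilityMeasure (ℙ : Measure Ω)]
    (p : PMF ℕ) (χ : List ℕ → Ω → ℕ)
    (hmeas : ∀ u, Measurable (χ u))
    (hindep : iIndepFun χ ℙ)
    (hdist : ∀ u, Measure.map (χ u) ℙ = p.toMeasure)
    (hp1 : p 1 ≠ 1) :
    ℙ {ω | (gwTree χ ω).Finite} = 1 ↔ ∑' k : ℕ, (k : ENNReal) * p k ≤ 1 :=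
  gwTree_finite_iff_subcritical_general p χ hmeas hindep hdist hp1
end

section
/- For a supercritical Laplace exponent Ψ with largest root b > 0, Lévy measure π and Gaussian coefficient β, the function Φ(λ) = (Ψ(λ+b) − Ψ(λ))/b satisfies Φ(λ) = 2βλ + ∫₀^∞ (1 − e^{−λx}) (1 − e^{−bx})/b · π(dx); in particular Φ is the Laplace exponent of a subordinator (an immigration mechanism). -/
/-!
Write `k(λ, x) = e^{-λx} - 1 + λx 1_{x ≤ 1}` for the compensated integrand of `Ψ`. Since the
compensator is linear in `λ` and the exponential is multiplicative,
`k(λ + b, x) - k(λ, x) - k(b, x) = (1 - e^{-λx})(1 - e^{-bx})`, while the quadratic term contributes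
`2βλb` and the drift cancels. Integrating (each `k(λ, ·)` is dominated by a multiple of `1 ∧ x²`
on `(0, ∞)`) gives `Ψ(λ + b) - Ψ(λ) - Ψ(b) = 2βλb + ∫ (1 - e^{-λx})(1 - e^{-bx}) π(dx)`, and
`Ψ(b) = 0` yields the formula. The new Lévy measure integrates `1 ∧ x` because
`(1 - e^{-bx})/b ≤ x ∧ 1/b`.
-/

open Set MeasureTheory

/-- The Lévy–Khintchine formula for an (unkilled) spectrally positive Laplace exponent
with triplet `(α, β, π)`. -/
noncomputable def laplaceExponent (α β : ℝ) (π : Measure ℝ) (l : ℝ) : ℝ :=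
  α * l + β * l ^ 2 +
    ∫ x, (Real.exp (-l * x) - 1 + (if x ≤ 1 then l * x else 0)) ∂π

noncomputable def levyIntegrand (l x : ℝ) : ℝ :=
  Real.exp (-l * x) - 1 + if x ≤ 1 then l * x else 0

lemma laplaceExponent_eq (α β : ℝ) (π : Measure ℝ) (l : ℝ) :
    laplaceExponent α β π l = α * l + β * l ^ 2 + ∫ x, levyIntegrand l x ∂π :=
  rfl

lemma Real.exp_neg_sub_one_add_le_sq {t : ℝ} (ht : 0 ≤ t) : Real.exp (-t) - 1 + t ≤ t ^ 2 := by
  rcases le_or_gt t 1 with h | h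
  · have := Real.abs_exp_sub_one_sub_id_le (x := -t) (by rwa [abs_neg, abs_of_nonneg ht])
    rw [neg_sq, sub_neg_eq_add] at this
    exact (abs_le.mp this).2
  · nlinarith [Real.exp_le_one_iff.mpr (neg_nonpos.mpr ht)]

lemma measurable_levyIntegrand (l : ℝ) : Measurable (levyIntegrand l) :=
  (by fun_prop : Measurable fun x : ℝ => Real.exp (-l * x) - 1).add
    (Measurable.ite measurableSet_Iic (by fun_prop) measurable_const)

lemma abs_levyIntegrand_le {l x : ℝ} (hl : 0 ≤ l) (hx : 0 < x) :
    |levyIntegrand l x| ≤ max (l ^ 2) 1 * min 1 (x ^ 2) := by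
  have hexp_le : Real.exp (-l * x) ≤ 1 := Real.exp_le_one_iff.mpr (by nlinarith)
  rcases le_or_gt x 1 with hx1 | hx1
  · have hlx : 0 ≤ l * x := mul_nonneg hl hx.le
    rw [levyIntegrand, if_pos hx1, min_eq_right (by nlinarith), neg_mul,
      abs_of_nonneg (by linarith [Real.one_sub_le_exp_neg (l * x)])]
    calc Real.exp (-(l * x)) - 1 + l * x ≤ (l * x) ^ 2 := Real.exp_neg_sub_one_add_le_sq hlx
      _ = l ^ 2 * x ^ 2 := mul_pow ..
      _ ≤ max (l ^ 2) 1 * x ^ 2 := by gcongr; exact le_max_left ..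
  · rw [levyIntegrand, if_neg hx1.not_ge, add_zero, min_eq_left (by nlinarith), mul_one, abs_le]
    constructor <;> nlinarith [Real.exp_pos (-l * x), le_max_right (l ^ 2) 1]

lemma integrable_min_one_sq {π : Measure ℝ}
    (hπ : ∫⁻ x, ENNReal.ofReal (min 1 (x ^ 2)) ∂π < ⊤) :
    Integrable (fun x => min 1 (x ^ 2)) π :=
  ⟨by fun_prop, (hasFiniteIntegral_iff_ofReal (ae_of_all _ fun x => by positivity)).2 hπ⟩

lemma integrable_levyIntegrand {π : Measure ℝ} (hpos : ∀ᵐ x ∂π, 0 < x)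
    (hπ : Integrable (fun x => min 1 (x ^ 2)) π) {l : ℝ} (hl : 0 ≤ l) :
    Integrable (levyIntegrand l) π :=
  (hπ.const_mul (max (l ^ 2) 1)).mono' (measurable_levyIntegrand l).aestronglyMeasurable
    (by filter_upwards [hpos] with x hx using abs_levyIntegrand_le hl hx)

lemma levyIntegrand_add_sub (l b x : ℝ) :
    levyIntegrand (l + b) x - levyIntegrand l x - levyIntegrand b x =
      (1 - Real.exp (-l * x)) * (1 - Real.exp (-b * x)) := by
  have hexp : Real.exp (-(l + b) * x) = Real.exp (-l * x) * Real.exp (-b * x) := by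
    rw [← Real.exp_add]; ring_nf
  unfold levyIntegrand
  rw [hexp]
  split_ifs <;> ring

theorem laplaceExponent_add_sub (α β : ℝ) {π : Measure ℝ} (hpos : ∀ᵐ x ∂π, 0 < x)
    (hπ : Integrable (fun x => min 1 (x ^ 2)) π) {l b : ℝ} (hl : 0 ≤ l) (hb : 0 ≤ b) :
    laplaceExponent α β π (l + b) - laplaceExponent α β π l - laplaceExponent α β π b =
      2 * β * l * b + ∫ x, (1 - Real.exp (-l * x)) * (1 - Real.exp (-b * x)) ∂π := by
  have hI : ∀ {t : ℝ}, 0 ≤ t → Integrable (levyIntegrand t) π := integrable_levyIntegrand hpos hπ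
  simp_rw [laplaceExponent_eq, ← levyIntegrand_add_sub l b]
  have hlb := hI (add_nonneg hl hb)
  rw [integral_sub (f := fun x => levyIntegrand (l + b) x - levyIntegrand l x) (hlb.sub (hI hl))
    (hI hb), integral_sub hlb (hI hl)]
  ring

lemma min_one_mul_one_sub_exp_neg_div_le {b x : ℝ} (hb : 0 < b) (hx : 0 ≤ x) :
    min 1 x * (1 - Real.exp (-b * x)) / b ≤ max 1 b⁻¹ * min 1 (x ^ 2) := by
  have hle_x : (1 - Real.exp (-b * x)) / b ≤ x := by
    rw [div_le_iff₀ hb, neg_mul]; linarith [Real.one_sub_le_exp_neg (b * x)]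
  have hle_inv : (1 - Real.exp (-b * x)) / b ≤ b⁻¹ := by
    rw [div_le_iff₀ hb, inv_mul_cancel₀ hb.ne']; linarith [Real.exp_pos (-b * x)]
  rw [mul_div_assoc]
  rcases le_or_gt x 1 with hx1 | hx1
  · rw [min_eq_right hx1, min_eq_right (by nlinarith)]
    calc x * ((1 - Real.exp (-b * x)) / b) ≤ x * x := by gcongr
      _ ≤ max 1 b⁻¹ * x ^ 2 := by nlinarith [le_max_left 1 b⁻¹]
  · rw [min_eq_left hx1.le, min_eq_left (by nlinarith), one_mul, mul_one]
    exact hle_inv.trans (le_max_right _ _)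

lemma lintegral_min_one_mul_one_sub_exp_neg_div_lt_top {π : Measure ℝ}
    (hpos : ∀ᵐ x ∂π, 0 < x) (hπ : ∫⁻ x, ENNReal.ofReal (min 1 (x ^ 2)) ∂π < ⊤)
    {b : ℝ} (hb : 0 < b) :
    ∫⁻ x, ENNReal.ofReal (min 1 x * (1 - Real.exp (-b * x)) / b) ∂π < ⊤ :=
  calc ∫⁻ x, ENNReal.ofReal (min 1 x * (1 - Real.exp (-b * x)) / b) ∂π
      ≤ ∫⁻ x, ENNReal.ofReal (max 1 b⁻¹) * ENNReal.ofReal (min 1 (x ^ 2)) ∂π := by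
        refine lintegral_mono_ae ?_
        filter_upwards [hpos] with x hx
        rw [← ENNReal.ofReal_mul (zero_le_one.trans (le_max_left _ _))]
        exact ENNReal.ofReal_le_ofReal (min_one_mul_one_sub_exp_neg_div_le hb hx.le)
    _ = ENNReal.ofReal (max 1 b⁻¹) * ∫⁻ x, ENNReal.ofReal (min 1 (x ^ 2)) ∂π :=
        lintegral_const_mul' _ _ ENNReal.ofReal_ne_top
    _ < ⊤ := ENNReal.mul_lt_top ENNReal.ofReal_lt_top hπ

theorem immigration_mechanism_formula_general (α β : ℝ) (π : Measure ℝ)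
    (hsupp : π (Iic 0) = 0)
    (hπ : ∫⁻ x, ENNReal.ofReal (min 1 (x ^ 2)) ∂π < ⊤)
    (b : ℝ) (hb : 0 < b) (hbroot : laplaceExponent α β π b = 0) :
    (∀ l : ℝ, 0 ≤ l →
      (laplaceExponent α β π (l + b) - laplaceExponent α β π l) / b =
        2 * β * l +
          ∫ x, (1 - Real.exp (-l * x)) * (1 - Real.exp (-b * x)) / b ∂π) ∧
    ∫⁻ x, ENNReal.ofReal (min 1 x * (1 - Real.exp (-b * x)) / b) ∂π < ⊤ := by
  have hpos : ∀ᵐ x ∂π, 0 < x := by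
    filter_upwards [measure_eq_zero_iff_ae_notMem.1 hsupp] with x hx using not_le.1 hx
  refine ⟨fun l hl => ?_, lintegral_min_one_mul_one_sub_exp_neg_div_lt_top hpos hπ hb⟩
  have hcocycle := laplaceExponent_add_sub α β hpos (integrable_min_one_sq hπ) hl hb.le
  rw [hbroot, sub_zero] at hcocycle
  rw [hcocycle, integral_div]
  field_simp

/-- For a supercritical Laplace exponent `Ψ` with largest root `b > 0`, the function
`Φ(λ) = (Ψ(λ+b) − Ψ(λ))/b` equals `2βλ + ∫ (1 − e^{−λx})(1 − e^{−bx})/b π(dx)`; in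
particular `Φ` is the Laplace exponent of a subordinator (its Lévy measure
`(1 − e^{−bx})/b · π(dx)` integrates `1 ∧ x`). -/
theorem immigration_mechanism_formula (α β : ℝ) (π : Measure ℝ)
    (hβ : 0 ≤ β)
    (hsupp : π (Iic 0) = 0)
    (hπ : ∫⁻ x, ENNReal.ofReal (min 1 (x ^ 2)) ∂π < ⊤)
    (b : ℝ) (hb : 0 < b) (hbroot : laplaceExponent α β π b = 0)
    (hbmax : ∀ x : ℝ, 0 ≤ x → laplaceExponent α β π x = 0 → x ≤ b) :
    (∀ l : ℝ, 0 ≤ l →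
      (laplaceExponent α β π (l + b) - laplaceExponent α β π l) / b =
        2 * β * l +
          ∫ x, (1 - Real.exp (-l * x)) * (1 - Real.exp (-b * x)) / b ∂π) ∧
    ∫⁻ x, ENNReal.ofReal (min 1 x * (1 - Real.exp (-b * x)) / b) ∂π < ⊤ :=
  immigration_mechanism_formula_general α β π hsupp hπ b hb hbroot
end

section
/- Let (τ, d, ρ) be a locally compact rooted real tree. Then the set 𝓘 of points lying on some infinite line of descent is empty if and only if τ is compact. Moreover, when τ is non-compact, 𝓘 is a closed connected subset of τ containing the root. -/
open Set

/-- `φ` is a geodesic from `x` to `y`, parametrized by `[0, dist x y]`. -/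
def IsGeodesicPath {T : Type*} [MetricSpace T] (x y : T) (φ : ℝ → T) : Prop :=
  φ 0 = x ∧ φ (dist x y) = y ∧
    ∀ s ∈ Icc 0 (dist x y), ∀ t ∈ Icc 0 (dist x y), dist (φ s) (φ t) = |s - t|

/-- A real tree: a complete metric space with existence and uniqueness of geodesics
and no loops. -/
def IsRealTree (T : Type*) [MetricSpace T] : Prop :=
  CompleteSpace T ∧
  (∀ x y : T, ∃ φ : ℝ → T, IsGeodesicPath x y φ) ∧
  (∀ (x y : T) (φ ψ : ℝ → T), IsGeodesicPath x y φ → IsGeodesicPath x y ψ →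
    ∀ t ∈ Icc 0 (dist x y), φ t = ψ t) ∧
  (∀ (x y : T) (γ : ℝ → T), ContinuousOn γ (Icc 0 1) → InjOn γ (Icc 0 1) →
    γ 0 = x → γ 1 = y → ∀ φ : ℝ → T, IsGeodesicPath x y φ →
      γ '' Icc 0 1 = φ '' Icc 0 (dist x y))

/-- An infinite line of descent from the point of view of the root `ρ`: an isometric ray
`φ : [0,∞) → T` along which the distance to the root increases. -/
def IsInfLineOfDescent {T : Type*} [MetricSpace T] (ρ : T) (φ : ℝ → T) : Prop :=
  (∀ s ∈ Ici (0:ℝ), ∀ t ∈ Ici (0:ℝ), dist (φ s) (φ t) = |s - t|) ∧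
  StrictMonoOn (fun t => dist ρ (φ t)) (Ici 0)

/-- The set of points having an infinite line of descent. -/
def infDescentSet (T : Type*) [MetricSpace T] (ρ : T) : Set T :=
  {σ | ∃ φ : ℝ → T, IsInfLineOfDescent ρ φ ∧ σ ∈ φ '' Ici 0}

/-!
Along a line of descent `φ` the distance to the root grows at unit speed,
`d(ρ, φ t) = d(ρ, φ 0) + t`: the geodesic from `ρ` to `φ 0` followed by `φ` on `[0, t]` is an
arc, because the distance to `ρ` is at most `d(ρ, φ 0)` on the first piece and larger on the
second, and in a real tree every arc is the geodesic between its endpoints. Hence every line of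
descent extends backwards to a geodesic ray from the root, so `𝓘` is the union of the rays from
`ρ`; this makes it connected, and it contains `ρ` as soon as it is nonempty. Such rays exist
exactly when the tree is unbounded: since closed balls are compact, geodesics from `ρ` to points
at distance `≥ n` converge pointwise along an ultrafilter to a ray. The same limit argument
applied to the rays through a convergent sequence of points of `𝓘` shows that `𝓘` is closed.
-/

open Filter Topology

noncomputable def concatPath {X : Type*} (γ : ℝ → X) (r : ℝ) (φ : ℝ → X) (u : ℝ) : X :=
  if u ≤ r then γ u else φ (u - r)

section concatPath

variable {X : Type*} {γ φ : ℝ → X} {r t u : ℝ}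

lemma concatPath_of_le (hu : u ≤ r) : concatPath γ r φ u = γ u := if_pos hu

lemma concatPath_of_lt (hu : r < u) : concatPath γ r φ u = φ (u - r) := if_neg (not_le.2 hu)

lemma continuousOn_concatPath [TopologicalSpace X] (hγ : ContinuousOn γ (Icc 0 r))
    (hφ : ContinuousOn φ (Icc 0 t)) (hr : 0 ≤ r) (ht : 0 ≤ t) (hjoin : γ r = φ 0) :
    ContinuousOn (concatPath γ r φ) (Icc 0 (r + t)) := by
  rw [← Icc_union_Icc_eq_Icc hr (le_add_of_nonneg_right ht)]
  refine ContinuousOn.union_of_isClosed ?_ ?_ isClosed_Icc isClosed_Icc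
  · exact hγ.congr fun u hu => concatPath_of_le hu.2
  · have hφ' : ContinuousOn (fun u => φ (u - r)) (Icc r (r + t)) :=
      hφ.comp (continuousOn_id.sub continuousOn_const) fun u hu =>
        ⟨by simpa using hu.1, by simpa [add_comm] using hu.2⟩
    refine hφ'.congr fun u hu => ?_
    rcases hu.1.eq_or_lt with rfl | hlt
    · rw [concatPath_of_le le_rfl, hjoin]
      simp
    · exact concatPath_of_lt hlt

lemma injOn_concatPath (hγ : InjOn γ (Icc 0 r)) (hφ : InjOn φ (Icc 0 t))
    (hdisj : ∀ a ∈ Icc 0 r, ∀ b ∈ Ioc 0 t, γ a ≠ φ b) :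
    InjOn (concatPath γ r φ) (Icc 0 (r + t)) := by
  have hφ_mem {u : ℝ} (hu : u ∈ Icc 0 (r + t)) (hru : r < u) : u - r ∈ Ioc 0 t :=
    ⟨sub_pos.2 hru, by linarith [hu.2]⟩
  intro u hu v hv huv
  rcases le_or_gt u r with hur | hru <;> rcases le_or_gt v r with hvr | hrv
  · rw [concatPath_of_le hur, concatPath_of_le hvr] at huv
    exact hγ ⟨hu.1, hur⟩ ⟨hv.1, hvr⟩ huv
  · rw [concatPath_of_le hur, concatPath_of_lt hrv] at huv
    exact absurd huv (hdisj u ⟨hu.1, hur⟩ _ (hφ_mem hv hrv))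
  · rw [concatPath_of_lt hru, concatPath_of_le hvr] at huv
    exact absurd huv.symm (hdisj v ⟨hv.1, hvr⟩ _ (hφ_mem hu hru))
  · rw [concatPath_of_lt hru, concatPath_of_lt hrv] at huv
    exact sub_left_inj.1 (hφ (Ioc_subset_Icc_self (hφ_mem hu hru))
      (Ioc_subset_Icc_self (hφ_mem hv hrv)) huv)

end concatPath

section RealTree

variable {T : Type*} [MetricSpace T]

def IsIsometricOn (f : ℝ → T) (s : Set ℝ) : Prop :=
  ∀ x ∈ s, ∀ y ∈ s, dist (f x) (f y) = |x - y|

namespace IsIsometricOn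

variable {f : ℝ → T} {s t : Set ℝ}

lemma mono (hf : IsIsometricOn f s) (hts : t ⊆ s) : IsIsometricOn f t :=
  fun x hx y hy => hf x (hts hx) y (hts hy)

lemma continuousOn (hf : IsIsometricOn f s) : ContinuousOn f s := by
  refine LipschitzOnWith.continuousOn (K := 1) fun x hx y hy => ?_
  rw [edist_dist, edist_dist, hf x hx y hy, ENNReal.coe_one, one_mul, Real.dist_eq]

lemma injOn (hf : IsIsometricOn f s) : InjOn f s := fun x hx y hy hxy => by
  have h := hf x hx y hy
  rw [hxy, dist_self, eq_comm, abs_eq_zero, sub_eq_zero] at h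
  exact h

lemma dist_eq_sub {a x : ℝ} (hf : IsIsometricOn f (Icc a x)) (hax : a ≤ x) :
    dist (f a) (f x) = x - a := by
  rw [hf a ⟨le_rfl, hax⟩ x ⟨hax, le_rfl⟩, abs_sub_comm, abs_of_nonneg (sub_nonneg.2 hax)]

lemma comp_add_right {a : ℝ} (hf : IsIsometricOn f (Ici a)) :
    IsIsometricOn (fun u => f (u + a)) (Ici 0) := fun x hx y hy => by
  rw [hf (x + a) (by simpa using hx) (y + a) (by simpa using hy), add_sub_add_right_eq_sub]

end IsIsometricOn

lemma IsGeodesicPath.isIsometricOn {x y : T} {φ : ℝ → T} (h : IsGeodesicPath x y φ) :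
    IsIsometricOn φ (Icc 0 (dist x y)) :=
  h.2.2

lemma IsGeodesicPath.dist_left {x y : T} {φ : ℝ → T} (h : IsGeodesicPath x y φ) {a : ℝ}
    (ha : a ∈ Icc 0 (dist x y)) : dist x (φ a) = a := by
  rw [← h.1, h.isIsometricOn.mono (Icc_subset_Icc_right ha.2) |>.dist_eq_sub ha.1, sub_zero]

lemma IsInfLineOfDescent.isIsometricOn {ρ : T} {φ : ℝ → T} (h : IsInfLineOfDescent ρ φ) :
    IsIsometricOn φ (Ici 0) :=
  h.1

lemma IsInfLineOfDescent.comp_add_right {ρ : T} {φ : ℝ → T} (h : IsInfLineOfDescent ρ φ)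
    {a : ℝ} (ha : 0 ≤ a) : IsInfLineOfDescent ρ (fun t => φ (t + a)) :=
  ⟨(h.isIsometricOn.mono (Ici_subset_Ici.2 ha)).comp_add_right, fun _ hx _ hy hxy =>
    h.2 (add_nonneg hx ha) (add_nonneg hy ha) (add_lt_add_left hxy a)⟩

def IsRootRay (ρ : T) (ψ : ℝ → T) : Prop :=
  ψ 0 = ρ ∧ IsIsometricOn ψ (Ici 0)

namespace IsRootRay

variable {ρ : T} {ψ : ℝ → T}

lemma dist_root (h : IsRootRay ρ ψ) {t : ℝ} (ht : 0 ≤ t) : dist ρ (ψ t) = t := by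
  rw [← h.1, (h.2.mono Icc_subset_Ici_self).dist_eq_sub ht, sub_zero]

lemma isInfLineOfDescent (h : IsRootRay ρ ψ) : IsInfLineOfDescent ρ ψ :=
  ⟨h.2, fun s hs t ht hst => by simpa only [h.dist_root hs, h.dist_root ht]⟩

lemma image_subset_infDescentSet (h : IsRootRay ρ ψ) : ψ '' Ici 0 ⊆ infDescentSet T ρ :=
  fun _ hσ => ⟨ψ, h.isInfLineOfDescent, hσ⟩

lemma root_mem_infDescentSet (h : IsRootRay ρ ψ) : ρ ∈ infDescentSet T ρ :=
  h.image_subset_infDescentSet ⟨0, self_mem_Ici, h.1⟩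

end IsRootRay

lemma IsRealTree.dist_add_dist_of_mem_arc (htree : IsRealTree T) {γ : ℝ → T} {L : ℝ}
    (hL : 0 < L) (hcont : ContinuousOn γ (Icc 0 L)) (hinj : InjOn γ (Icc 0 L)) {x : T}
    (hx : x ∈ γ '' Icc 0 L) : dist (γ 0) x + dist x (γ L) = dist (γ 0) (γ L) := by
  obtain ⟨ψ, hψ⟩ := htree.2.1 (γ 0) (γ L)
  have hscale : (fun u => u * L) '' Icc 0 1 = Icc 0 L := by
    rw [image_mul_right_Icc zero_le_one hL.le, zero_mul, one_mul]
  have harc : γ '' Icc 0 L = ψ '' Icc 0 (dist (γ 0) (γ L)) := by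
    have hmaps : MapsTo (fun u => u * L) (Icc 0 1) (Icc 0 L) := hscale ▸ mapsTo_image _ _
    rw [← hscale, image_image]
    refine htree.2.2.2 _ _ _ (hcont.comp (by fun_prop) hmaps)
      (hinj.comp (mul_left_injective₀ hL.ne').injOn hmaps) (by simp) (by simp) ψ hψ
  obtain ⟨a, ha, rfl⟩ := harc ▸ hx
  have hrest := (hψ.isIsometricOn.mono (Icc_subset_Icc_left ha.1)).dist_eq_sub ha.2
  rw [hψ.2.1] at hrest
  rw [hψ.dist_left ha, hrest, add_sub_cancel]

lemma IsInfLineOfDescent.dist_root_eq (htree : IsRealTree T) {ρ : T} {φ : ℝ → T}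
    (hφ : IsInfLineOfDescent ρ φ) {t : ℝ} (ht : 0 ≤ t) : dist ρ (φ t) = dist ρ (φ 0) + t := by
  rcases ht.eq_or_lt with rfl | ht
  · rw [add_zero]
  obtain ⟨γ, hγ⟩ := htree.2.1 ρ (φ 0)
  set r := dist ρ (φ 0)
  have hr : 0 ≤ r := dist_nonneg
  have hφt : IsIsometricOn φ (Icc 0 t) := hφ.isIsometricOn.mono Icc_subset_Ici_self
  have hdisj : ∀ a ∈ Icc 0 r, ∀ b ∈ Ioc 0 t, γ a ≠ φ b := by
    rintro a ha b hb hab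
    have hlt : dist ρ (φ 0) < dist ρ (φ b) := hφ.2 self_mem_Ici (mem_Ici.2 hb.1.le) hb.1
    rw [← hab, hγ.dist_left ha] at hlt
    exact hlt.not_ge ha.2
  have harc := htree.dist_add_dist_of_mem_arc (add_pos_of_nonneg_of_pos hr ht)
    (continuousOn_concatPath hγ.isIsometricOn.continuousOn hφt.continuousOn hr ht.le hγ.2.1)
    (injOn_concatPath hγ.isIsometricOn.injOn hφt.injOn hdisj)
    ⟨r, ⟨hr, le_add_of_nonneg_right ht.le⟩, concatPath_of_le le_rfl⟩
  rw [concatPath_of_le hr, concatPath_of_lt (lt_add_of_pos_right r ht),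
    add_sub_cancel_left, hγ.1, hγ.2.1, hφt.dist_eq_sub ht.le, sub_zero] at harc
  exact harc.symm

lemma IsGeodesicPath.isRootRay_concatPath {ρ : T} {γ φ : ℝ → T} (hγ : IsGeodesicPath ρ (φ 0) γ)
    (hφ : IsIsometricOn φ (Ici 0)) (hφρ : ∀ b, 0 ≤ b → dist ρ (φ b) = dist ρ (φ 0) + b) :
    IsRootRay ρ (concatPath γ (dist ρ (φ 0)) φ) := by
  set r := dist ρ (φ 0)
  have hr : 0 ≤ r := dist_nonneg
  have hmixed : ∀ a b, a ∈ Icc 0 r → r < b → dist (γ a) (φ (b - r)) = b - a := by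
    intro a b ha hb
    have hbr : 0 ≤ b - r := sub_nonneg.2 hb.le
    refine le_antisymm ?_ ?_
    · calc dist (γ a) (φ (b - r)) ≤ dist (γ a) (γ r) + dist (γ r) (φ (b - r)) :=
            dist_triangle _ _ _
        _ = (r - a) + (b - r) := by
          rw [(hγ.isIsometricOn.mono (Icc_subset_Icc_left ha.1)).dist_eq_sub ha.2, hγ.2.1,
            (hφ.mono Icc_subset_Ici_self).dist_eq_sub hbr, sub_zero]
        _ = b - a := by ring
    · have htri := dist_triangle ρ (γ a) (φ (b - r))
      rw [hγ.dist_left ha, hφρ _ hbr] at htri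
      linarith
  refine ⟨by rw [concatPath_of_le hr, hγ.1], fun u hu v hv => ?_⟩
  rcases le_or_gt u r with hur | hru <;> rcases le_or_gt v r with hvr | hrv
  · rw [concatPath_of_le hur, concatPath_of_le hvr]
    exact hγ.2.2 u ⟨hu, hur⟩ v ⟨hv, hvr⟩
  · rw [concatPath_of_le hur, concatPath_of_lt hrv, hmixed u v ⟨hu, hur⟩ hrv, abs_sub_comm,
      abs_of_nonneg (by linarith)]
  · rw [concatPath_of_lt hru, concatPath_of_le hvr, dist_comm, hmixed v u ⟨hv, hvr⟩ hru,
      abs_of_nonneg (by linarith)]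
  · rw [concatPath_of_lt hru, concatPath_of_lt hrv,
      hφ _ (mem_Ici.2 (sub_nonneg.2 hru.le)) _ (mem_Ici.2 (sub_nonneg.2 hrv.le)),
      sub_sub_sub_cancel_right]

lemma mem_infDescentSet_iff (htree : IsRealTree T) {ρ σ : T} :
    σ ∈ infDescentSet T ρ ↔ ∃ ψ, IsRootRay ρ ψ ∧ σ ∈ ψ '' Ici 0 := by
  refine ⟨?_, fun ⟨ψ, hψ, hσ⟩ => hψ.image_subset_infDescentSet hσ⟩
  rintro ⟨φ, hφ, s, hs, rfl⟩
  set φ₁ := fun t => φ (t + s)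
  have hφ₁ : IsInfLineOfDescent ρ φ₁ := hφ.comp_add_right hs
  obtain ⟨γ, hγ⟩ := htree.2.1 ρ (φ₁ 0)
  refine ⟨_, hγ.isRootRay_concatPath hφ₁.isIsometricOn fun b hb => hφ₁.dist_root_eq htree hb,
    dist ρ (φ₁ 0), dist_nonneg, ?_⟩
  rw [concatPath_of_le le_rfl, hγ.2.1]
  simp [φ₁]

lemma IsIsometricOn.not_isBounded_image_Ici {f : ℝ → T} (hf : IsIsometricOn f (Ici 0)) :
    ¬ Bornology.IsBounded (f '' Ici 0) := by
  rintro hb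
  obtain ⟨C, hC⟩ := (Metric.isBounded_iff_subset_closedBall (f 0)).1 hb
  have hpos : 0 ≤ max C 0 + 1 := by positivity
  have hfar := Metric.mem_closedBall'.1 (hC (mem_image_of_mem f (mem_Ici.2 hpos)))
  rw [(hf.mono Icc_subset_Ici_self).dist_eq_sub hpos, sub_zero] at hfar
  linarith [le_max_left C 0]

lemma infDescentSet_eq_empty_of_isCompact_univ (h : IsCompact (univ : Set T)) (ρ : T) :
    infDescentSet T ρ = ∅ :=
  eq_empty_of_forall_notMem fun _ ⟨_, hφ, _⟩ =>
    hφ.isIsometricOn.not_isBounded_image_Ici (h.isBounded.subset (subset_univ _))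

lemma exists_isRootRay_tendsto [ProperSpace T] {ρ : T} {g : ℕ → ℝ → T} (hg0 : ∀ n, g n 0 = ρ)
    (hiso : ∀ s, 0 ≤ s → ∀ t, 0 ≤ t → ∀ᶠ n in atTop, dist (g n s) (g n t) = |s - t|) :
    ∃ ψ, IsRootRay ρ ψ ∧ ∀ t, 0 ≤ t → Tendsto (fun n => g n t) (hyperfilter ℕ) (𝓝 (ψ t)) := by
  -- One ultrafilter for all `t` at once, so that the limit points inherit the distances.
  have hlim : ∀ t, 0 ≤ t → ∃ x, Tendsto (fun n => g n t) (hyperfilter ℕ) (𝓝 x) := by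
    intro t ht
    have hball : ∀ᶠ n in hyperfilter ℕ, g n t ∈ Metric.closedBall ρ t :=
      ((hiso 0 le_rfl t ht).filter_mono Nat.hyperfilter_le_atTop).mono fun n hn => by
        rw [Metric.mem_closedBall', ← hg0 n, hn, zero_sub, abs_neg, abs_of_nonneg ht]
    obtain ⟨x, -, hx⟩ := (isCompact_closedBall ρ t).ultrafilter_le_nhds'
      ((hyperfilter ℕ).map fun n => g n t) hball
    exact ⟨x, hx⟩
  have : Nonempty T := ⟨ρ⟩
  choose! ψ hψ using hlim
  refine ⟨ψ, ⟨tendsto_nhds_unique (hψ 0 le_rfl) ?_, fun s hs t ht => ?_⟩, hψ⟩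
  · simp only [hg0]
    exact tendsto_const_nhds
  · refine tendsto_nhds_unique ((hψ s hs).dist (hψ t ht)) (tendsto_const_nhds.congr' ?_)
    exact ((hiso s hs t ht).filter_mono Nat.hyperfilter_le_atTop).mono fun n hn => hn.symm

lemma IsRealTree.exists_isRootRay [ProperSpace T] (htree : IsRealTree T) (ρ : T)
    (h : ¬ IsCompact (univ : Set T)) : ∃ ψ, IsRootRay ρ ψ := by
  have hfar : ∀ n : ℕ, ∃ x, (n : ℝ) < dist ρ x := by
    intro n
    by_contra! hn
    exact h ((isCompact_closedBall ρ n).of_isClosed_subset isClosed_univ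
      fun x _ => Metric.mem_closedBall'.2 (hn x))
  choose x hx using hfar
  choose γ hγ using fun n => htree.2.1 ρ (x n)
  have hiso : ∀ s, 0 ≤ s → ∀ t, 0 ≤ t → ∀ᶠ n in atTop, dist (γ n s) (γ n t) = |s - t| := by
    intro s hs t ht
    refine eventually_atTop.2 ⟨⌈max s t⌉₊, fun n hn => ?_⟩
    have hst : max s t ≤ dist ρ (x n) := (Nat.ceil_le.1 hn).trans (hx n).le
    exact (hγ n).2.2 s ⟨hs, (le_max_left s t).trans hst⟩ t ⟨ht, (le_max_right s t).trans hst⟩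
  obtain ⟨ψ, hψ, -⟩ := exists_isRootRay_tendsto (fun n => (hγ n).1) hiso
  exact ⟨ψ, hψ⟩

lemma IsRealTree.isClosed_infDescentSet [ProperSpace T] (htree : IsRealTree T) (ρ : T) :
    IsClosed (infDescentSet T ρ) := by
  refine IsSeqClosed.isClosed fun σs σ hσs hlim => ?_
  choose ψs hψs hσψs using fun n => (mem_infDescentSet_iff htree).1 (hσs n)
  obtain ⟨ψ, hψ, hψlim⟩ := exists_isRootRay_tendsto (fun n => (hψs n).1)
    fun s hs t ht => Eventually.of_forall fun n => (hψs n).2 s hs t ht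
  refine (mem_infDescentSet_iff htree).2 ⟨ψ, hψ, dist ρ σ, dist_nonneg, ?_⟩
  have hclose : ∀ n, dist (σs n) (ψs n (dist ρ σ)) = |dist ρ (σs n) - dist ρ σ| := by
    intro n
    obtain ⟨u, hu, hσu⟩ := hσψs n
    rw [← hσu, (hψs n).dist_root hu]
    exact (hψs n).2 _ hu _ dist_nonneg
  have hclose_lim : Tendsto (fun n => dist (σs n) (ψs n (dist ρ σ))) atTop (𝓝 0) := by
    have hdist : Tendsto (fun n => dist ρ (σs n)) atTop (𝓝 (dist ρ σ)) :=
      tendsto_const_nhds.dist hlim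
    simpa only [hclose, sub_self, abs_zero] using (hdist.sub_const (dist ρ σ)).abs
  exact tendsto_nhds_unique (hψlim _ dist_nonneg)
    (tendsto_of_tendsto_of_dist (hlim.mono_left Nat.hyperfilter_le_atTop)
      (hclose_lim.mono_left Nat.hyperfilter_le_atTop))

lemma IsRealTree.isPreconnected_infDescentSet (htree : IsRealTree T) (ρ : T) :
    IsPreconnected (infDescentSet T ρ) :=
  isPreconnected_of_forall ρ fun _ hσ => by
    obtain ⟨ψ, hψ, hσψ⟩ := (mem_infDescentSet_iff htree).1 hσ
    exact ⟨ψ '' Ici 0, hψ.image_subset_infDescentSet, ⟨0, self_mem_Ici, hψ.1⟩, hσψ,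
      isPreconnected_Ici.image ψ hψ.2.continuousOn⟩

end RealTree

theorem infDescentSet_empty_iff_compact_general (T : Type*) [MetricSpace T]
    (htree : IsRealTree T) (hproper : ProperSpace T) (ρ : T) :
    (infDescentSet T ρ = ∅ ↔ IsCompact (univ : Set T)) ∧
    (¬ IsCompact (univ : Set T) →
      IsClosed (infDescentSet T ρ) ∧ IsConnected (infDescentSet T ρ) ∧
        ρ ∈ infDescentSet T ρ) := by
  have hρ (h : ¬ IsCompact (univ : Set T)) : ρ ∈ infDescentSet T ρ :=
    (htree.exists_isRootRay ρ h).elim fun _ hψ => hψ.root_mem_infDescentSet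
  refine ⟨⟨fun hempty => ?_, fun h => infDescentSet_eq_empty_of_isCompact_univ h ρ⟩,
    fun h => ⟨htree.isClosed_infDescentSet ρ, ⟨⟨ρ, hρ h⟩, htree.isPreconnected_infDescentSet ρ⟩,
      hρ h⟩⟩
  by_contra h
  exact (hempty ▸ hρ h : ρ ∈ (∅ : Set T))

/-- In a locally compact (boundedly compact) rooted real tree, the set `𝓘` of points lying
on some infinite line of descent is empty iff the tree is compact; when the tree is
non-compact, `𝓘` is a closed connected subset containing the root. -/
theorem infDescentSet_empty_iff_compact (T : Type*) [MetricSpace T] [Nonempty T]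
    (htree : IsRealTree T) (hproper : ProperSpace T) (ρ : T) :
    (infDescentSet T ρ = ∅ ↔ IsCompact (univ : Set T)) ∧
    (¬ IsCompact (univ : Set T) →
      IsClosed (infDescentSet T ρ) ∧ IsConnected (infDescentSet T ρ) ∧
        ρ ∈ infDescentSet T ρ) :=
  infDescentSet_empty_iff_compact_general T htree hproper ρ
end

section
/- For a finite plane tree τ coded by Lukasiewicz path e (with vertices u₀ < ⋯ < u_{p−1} in lexicographic order), the generation |u_i| of the i-th visited vertex equals #{ j < i : e_j ≤ min_{j < l ≤ i} e_l } , i.e. the number of times before i at which the path achieves a 'weak future minimum' on (j, i]. Equivalently |u_i| = #{ j ∈ {0,…,i−1} : e_j = min_{j ≤ l ≤ i} e_l and e_j ≤ e_l for all j ≤ l ≤ i }. -/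
open scoped Classical

/-- Number of children `k_u(τ)` of the word `u` in the finite set of words `τ`. -/
noncomputable def numChildren (τ : Finset (List ℕ)) (u : List ℕ) : ℕ :=
  (τ.filter (fun v => v ≠ [] ∧ v.dropLast = u)).card

/-- A finite plane tree. -/
def IsPlaneTree (τ : Finset (List ℕ)) : Prop :=
  [] ∈ τ ∧
  (∀ u ∈ τ, u ≠ [] → u.dropLast ∈ τ) ∧
  (∀ u ∈ τ, ∀ j : ℕ, (u ++ [j]) ∈ τ ↔ 1 ≤ j ∧ j ≤ numChildren τ u)

/-- The vertices of `τ` listed in (lexicographic) increasing order. -/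
noncomputable def sortedVertices (τ : Finset (List ℕ)) : List (List ℕ) :=
  τ.sort (· ≤ ·)

/-- The Lukasiewicz path of `τ`. -/
noncomputable def lukasPath (τ : Finset (List ℕ)) (i : ℕ) : ℤ :=
  ∑ j ∈ Finset.range i, ((numChildren τ ((sortedVertices τ).getD j []) : ℤ) - 1)

/-!
Read `e_i` as the size of the depth-first stack when `u_i` is visited: the vertices whose parent
precedes `u_i` but which come after `u_i` themselves, i.e. the younger siblings of the ancestors
of `u_i`. Indeed the children of `u_0, …, u_{i-1}` are `u_1, …, u_i` together with this stack.
The stack only grows while the search stays inside the subtree of `u_j`, and the first vertex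
outside that subtree is popped from the stack of `u_j`. Hence `e_j ≤ e_l` for all `l ∈ [j, i]`
exactly when `u_j` is an ancestor of `u_i`, and `u_i` has `|u_i|` ancestors, all visited before it.
-/

namespace List

variable {α : Type*}

theorem isPrefix_or_exists_of_lt [LT α] {u v : List α} (h : u < v) :
    u <+: v ∨ ∃ w b c s r, u = w ++ b :: s ∧ v = w ++ c :: r ∧ b < c := by
  induction (h : Lex (· < ·) u v) with
  | nil => exact .inl nil_prefix
  | @cons a _ _ _ ih =>
    rcases ih with ⟨t, rfl⟩ | ⟨w, b, c, s, r, rfl, rfl, hbc⟩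
    · exact .inl ⟨t, rfl⟩
    · exact .inr ⟨a :: w, b, c, s, r, rfl, rfl, hbc⟩
  | @rel a s b r hab => exact .inr ⟨[], a, b, s, r, rfl, rfl, hab⟩

theorem append_cons_lt_append_cons [LT α] (w : List α) {b c : α} (h : b < c) (s r : List α) :
    w ++ b :: s < w ++ c :: r :=
  append_left_lt (Lex.rel h)

variable [LinearOrder α]

/-- Core's `IsPrefix.le` concludes with core's `≤` on lists, not with the `LinearOrder` one. -/
theorem le_of_isPrefix {u v : List α} (h : u <+: v) : u ≤ v :=
  not_lt.1 h.le

theorem lt_append_cons (w : List α) (b : α) (s : List α) : w < w ++ b :: s := by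
  simpa using append_left_lt (l₁ := w) (Lex.nil : [] < b :: s)

theorem dropLast_lt {v : List α} (hv : v ≠ []) : v.dropLast < v :=
  calc v.dropLast < v.dropLast ++ [v.getLast hv] := by simpa using lt_append_cons v.dropLast _ []
    _ = v := dropLast_append_getLast hv

theorem IsPrefix.of_le_of_le {u v x : List α} (huv : u <+: v) (hux : u ≤ x) (hxv : x ≤ v) :
    u <+: x := by
  rcases hux.eq_or_lt with rfl | hlt
  · exact prefix_rfl
  rcases isPrefix_or_exists_of_lt hlt with hp | ⟨w, b, c, s, r, rfl, rfl, hbc⟩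
  · exact hp
  obtain ⟨t, rfl⟩ := huv
  refine absurd hxv (not_le.mpr ?_)
  simpa using append_cons_lt_append_cons w hbc (s ++ t) r

theorem lt_of_isPrefix_of_lt_of_not_isPrefix {u v x : List α} (hux : u <+: x) (huv : u < v)
    (hnp : ¬u <+: v) : x < v :=
  lt_of_not_ge fun hvx => hnp (hux.of_le_of_le huv.le hvx)

theorem isPrefix_of_lt_of_lt_concat {p u : List α} {c : α} (hpu : p < u) (hu : u < p ++ [c]) :
    p <+: u := by
  rcases isPrefix_or_exists_of_lt hpu with hp | ⟨w, b, b', s, r, rfl, rfl, hb⟩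
  · exact hp
  refine absurd hu (not_lt.mpr (le_of_lt ?_))
  simpa using append_cons_lt_append_cons w hb (s ++ [c]) r

end List

section Enumeration

variable (τ : Finset (List ℕ))

noncomputable def vertexAt (i : ℕ) : List ℕ :=
  (sortedVertices τ).getD i []

variable {τ}

theorem length_sortedVertices : (sortedVertices τ).length = τ.card :=
  Finset.length_sort _

theorem mem_sortedVertices {u : List ℕ} : u ∈ sortedVertices τ ↔ u ∈ τ :=
  Finset.mem_sort _

theorem vertexAt_eq_getElem {i : ℕ} (hi : i < τ.card) :
    vertexAt τ i = (sortedVertices τ)[i]'(length_sortedVertices.symm ▸ hi) :=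
  List.getD_eq_getElem _ _ _

theorem vertexAt_mem {i : ℕ} (hi : i < τ.card) : vertexAt τ i ∈ τ := by
  rw [vertexAt_eq_getElem hi]
  exact mem_sortedVertices.1 (List.getElem_mem _)

theorem vertexAt_lt_vertexAt_iff {i j : ℕ} (hi : i < τ.card) (hj : j < τ.card) :
    vertexAt τ i < vertexAt τ j ↔ i < j := by
  rw [vertexAt_eq_getElem hi, vertexAt_eq_getElem hj]
  exact (Finset.sortedLT_sort τ).getElem_lt_getElem_iff

theorem vertexAt_le_vertexAt_iff {i j : ℕ} (hi : i < τ.card) (hj : j < τ.card) :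
    vertexAt τ i ≤ vertexAt τ j ↔ i ≤ j := by
  simpa only [not_lt] using (vertexAt_lt_vertexAt_iff hj hi).not

theorem exists_vertexAt_eq {u : List ℕ} (hu : u ∈ τ) : ∃ i < τ.card, vertexAt τ i = u := by
  obtain ⟨i, hi, rfl⟩ := List.mem_iff_getElem.1 (mem_sortedVertices.2 hu)
  rw [length_sortedVertices] at hi
  exact ⟨i, hi, vertexAt_eq_getElem hi⟩

theorem injOn_vertexAt : Set.InjOn (vertexAt τ) (Set.Iio τ.card) := fun _ hi _ hj hij =>
  le_antisymm ((vertexAt_le_vertexAt_iff hi hj).1 hij.le)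
    ((vertexAt_le_vertexAt_iff hj hi).1 hij.ge)

theorem image_vertexAt_range {i : ℕ} (hi : i < τ.card) :
    (Finset.range i).image (vertexAt τ) = τ.filter (· < vertexAt τ i) := by
  ext u
  simp only [Finset.mem_image, Finset.mem_range, Finset.mem_filter]
  constructor
  · rintro ⟨j, hj, rfl⟩
    exact ⟨vertexAt_mem (hj.trans hi), (vertexAt_lt_vertexAt_iff (hj.trans hi) hi).2 hj⟩
  · rintro ⟨hu, hlt⟩
    obtain ⟨j, hj, rfl⟩ := exists_vertexAt_eq hu
    exact ⟨j, (vertexAt_lt_vertexAt_iff hj hi).1 hlt, rfl⟩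

theorem injOn_vertexAt_range {i : ℕ} (hi : i < τ.card) :
    Set.InjOn (vertexAt τ) (Finset.range i) :=
  injOn_vertexAt.mono fun _ hj => (Finset.mem_range.1 hj).trans hi

theorem lukasPath_eq_sum_lt {i : ℕ} (hi : i < τ.card) :
    lukasPath τ i = ∑ u ∈ τ.filter (· < vertexAt τ i), ((numChildren τ u : ℤ) - 1) := by
  rw [← image_vertexAt_range hi, Finset.sum_image (injOn_vertexAt_range hi)]
  rfl

theorem card_filter_range_vertexAt {i : ℕ} (hi : i < τ.card) (p : List ℕ → Prop)
    [DecidablePred p] :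
    ((Finset.range i).filter (fun j => p (vertexAt τ j))).card =
      (τ.filter (fun u => u < vertexAt τ i ∧ p u)).card := by
  rw [← Finset.card_image_of_injOn ((injOn_vertexAt_range hi).mono (Finset.filter_subset _ _)),
    ← Finset.filter_image, image_vertexAt_range hi, Finset.filter_filter]

end Enumeration

def IsPrefixClosed (τ : Finset (List ℕ)) : Prop :=
  ∀ ⦃u v : List ℕ⦄, u <+: v → v ∈ τ → u ∈ τ

theorem IsPlaneTree.isPrefixClosed {τ : Finset (List ℕ)} (hτ : IsPlaneTree τ) :
    IsPrefixClosed τ := by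
  intro u v huv hv
  induction v using List.reverseRecOn generalizing u with
  | nil => rwa [List.prefix_nil.1 huv]
  | append_singleton v a ih =>
    rcases List.prefix_concat_iff.1 huv with rfl | huv
    · exact hv
    · exact ih huv (by simpa using hτ.2.1 _ hv (by simp))

noncomputable def pendingVertices (τ : Finset (List ℕ)) (x : List ℕ) : Finset (List ℕ) :=
  τ.filter (fun v => v ≠ [] ∧ v.dropLast < x ∧ x < v)

section PrefixClosed

variable {τ : Finset (List ℕ)}

theorem sum_numChildren_filter_lt (hτ : IsPrefixClosed τ) (x : List ℕ) :
    ∑ u ∈ τ.filter (· < x), numChildren τ u =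
      (τ.filter (fun v => v ≠ [] ∧ v.dropLast < x)).card := by
  rw [Finset.card_eq_sum_card_fiberwise (f := List.dropLast) (t := τ.filter (· < x))]
  · refine Finset.sum_congr rfl fun u hu => ?_
    rw [numChildren, Finset.filter_filter]
    refine congrArg Finset.card (Finset.filter_congr fun v _ => ?_)
    have hux := (Finset.mem_filter.1 hu).2
    constructor
    · rintro ⟨hv, rfl⟩
      exact ⟨⟨hv, hux⟩, rfl⟩
    · rintro ⟨⟨hv, -⟩, rfl⟩
      exact ⟨hv, rfl⟩
  · intro v hv
    simp only [Finset.mem_coe, Finset.mem_filter] at hv ⊢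
    exact ⟨hτ (List.dropLast_prefix v) hv.1, hv.2.2⟩

theorem card_filter_ne_nil_le_eq_card_filter_lt {x : List ℕ} (hroot : [] ∈ τ) (hx : x ∈ τ) :
    (τ.filter (fun v => v ≠ [] ∧ v ≤ x)).card = (τ.filter (· < x)).card := by
  have hle_root : τ.filter (· ≤ x) = insert [] (τ.filter (fun v => v ≠ [] ∧ v ≤ x)) := by
    ext v
    by_cases hv : v = []
    · simpa [hv, hroot] using List.le_of_isPrefix List.nil_prefix
    · simp [hv]
  have hle_x : τ.filter (· ≤ x) = insert x (τ.filter (· < x)) := by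
    ext v
    simp only [Finset.mem_filter, Finset.mem_insert, le_iff_lt_or_eq]
    grind
  have h := congrArg Finset.card (hle_root.symm.trans hle_x)
  rw [Finset.card_insert_of_notMem (by simp), Finset.card_insert_of_notMem (by simp)] at h
  omega

theorem sum_numChildren_sub_one_eq_card_pendingVertices (hτ : IsPrefixClosed τ) {x : List ℕ}
    (hx : x ∈ τ) :
    ∑ u ∈ τ.filter (· < x), ((numChildren τ u : ℤ) - 1) = (pendingVertices τ x).card := by
  have hsplit := Finset.card_filter_add_card_filter_not
    (s := τ.filter (fun v => v ≠ [] ∧ v.dropLast < x)) (· ≤ x)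
  have hle : (τ.filter (fun v => v ≠ [] ∧ v.dropLast < x)).filter (· ≤ x) =
      τ.filter (fun v => v ≠ [] ∧ v ≤ x) := by
    rw [Finset.filter_filter]
    exact Finset.filter_congr fun v _ =>
      ⟨fun h => ⟨h.1.1, h.2⟩, fun h => ⟨⟨h.1, (List.dropLast_lt h.1).trans_le h.2⟩, h.2⟩⟩
  have hgt : (τ.filter (fun v => v ≠ [] ∧ v.dropLast < x)).filter (fun v => ¬v ≤ x) =
      pendingVertices τ x := by
    rw [pendingVertices, Finset.filter_filter]
    exact Finset.filter_congr fun v _ => by rw [not_le, and_assoc]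
  rw [hle, hgt, card_filter_ne_nil_le_eq_card_filter_lt (hτ List.nil_prefix hx) hx,
    ← sum_numChildren_filter_lt hτ] at hsplit
  rw [Finset.sum_sub_distrib, ← Nat.cast_sum, ← hsplit]
  simp

theorem pendingVertices_mono_of_isPrefix {u x : List ℕ} (hux : u <+: x) :
    pendingVertices τ u ⊆ pendingVertices τ x := by
  intro v hv
  simp only [pendingVertices, Finset.mem_filter] at hv ⊢
  obtain ⟨hvτ, hv, hpu, huv⟩ := hv
  have hnp : ¬u <+: v := by
    rw [← List.dropLast_append_getLast hv, List.prefix_concat_iff,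
      List.dropLast_append_getLast hv]
    rintro (rfl | hup)
    · exact lt_irrefl _ huv
    · exact not_lt.2 (List.le_of_isPrefix hup) hpu
  exact ⟨hvτ, hv, hpu.trans_le (List.le_of_isPrefix hux),
    List.lt_of_isPrefix_of_lt_of_not_isPrefix hux huv hnp⟩

theorem pendingVertices_ssubset_of_isLeast (hτ : IsPrefixClosed τ) {u x : List ℕ}
    (hx : IsLeast {y | y ∈ τ ∧ u < y ∧ ¬u <+: y} x) :
    pendingVertices τ x ⊂ pendingVertices τ u := by
  obtain ⟨⟨hxτ, hux, hnp⟩, hmin⟩ := hx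
  obtain ⟨w, b, c, s, r, rfl, rfl, hbc⟩ := (List.isPrefix_or_exists_of_lt hux).resolve_left hnp
  have hwc : w ++ c :: r = w ++ [c] :=
    le_antisymm
      (hmin ⟨hτ (by simp) hxτ, List.append_cons_lt_append_cons w hbc s [], by simp [hbc.ne]⟩)
      (List.le_of_isPrefix (by simp))
  rw [hwc] at hux ⊢
  have hw : w < w ++ b :: s := List.lt_append_cons w b s
  refine (Finset.ssubset_iff_of_subset fun v hv => ?_).2 ⟨w ++ [c], ?_, ?_⟩
  · simp only [pendingVertices, Finset.mem_filter] at hv ⊢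
    obtain ⟨hvτ, hv, hpx, hxv⟩ := hv
    have hpre : v.dropLast <+: w ++ [c] := List.isPrefix_of_lt_of_lt_concat hpx
      (by rwa [List.dropLast_append_getLast hv])
    rcases List.prefix_concat_iff.1 hpre with hp | hp
    · exact absurd hp hpx.ne
    · exact ⟨hvτ, hv, (List.le_of_isPrefix hp).trans_lt hw, hux.trans hxv⟩
  · simp only [pendingVertices, Finset.mem_filter]
    exact ⟨hwc ▸ hxτ, by simp, by simpa using hw, hux⟩
  · simp [pendingVertices]

theorem exists_card_pendingVertices_lt (hτ : IsPrefixClosed τ) {u x : List ℕ} (hx : x ∈ τ)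
    (hux : u ≤ x) (hnp : ¬u <+: x) :
    ∃ y ∈ τ, u < y ∧ y ≤ x ∧ (pendingVertices τ y).card < (pendingVertices τ u).card := by
  set S := τ.filter (fun y => u < y ∧ ¬u <+: y)
  have hxS : x ∈ S :=
    Finset.mem_filter.2 ⟨hx, hux.lt_of_ne (by rintro rfl; exact hnp List.prefix_rfl), hnp⟩
  have hleast : IsLeast {y | y ∈ τ ∧ u < y ∧ ¬u <+: y} (S.min' ⟨x, hxS⟩) := by
    simpa [S] using S.isLeast_min' ⟨x, hxS⟩
  exact ⟨_, hleast.1.1, hleast.1.2.1, S.min'_le x hxS,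
    Finset.card_lt_card (pendingVertices_ssubset_of_isLeast hτ hleast)⟩

theorem card_filter_lt_isPrefix (hτ : IsPrefixClosed τ) {x : List ℕ} (hx : x ∈ τ) :
    (τ.filter (fun u => u < x ∧ u <+: x)).card = x.length := by
  have himage :
      τ.filter (fun u => u < x ∧ u <+: x) = (Finset.range x.length).image x.take := by
    ext u
    simp only [Finset.mem_filter, Finset.mem_image, Finset.mem_range]
    constructor
    · rintro ⟨-, hux, hpre⟩
      refine ⟨u.length, hpre.length_le.lt_of_ne fun h => hux.ne (hpre.eq_of_length h), ?_⟩
      exact (List.prefix_iff_eq_take.1 hpre).symm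
    · rintro ⟨m, hm, rfl⟩
      refine ⟨hτ (List.take_prefix m x) hx, ?_, List.take_prefix m x⟩
      refine (List.le_of_isPrefix (List.take_prefix m x)).lt_of_ne fun h => ?_
      have := congrArg List.length h
      rw [List.length_take] at this
      omega
  rw [himage, Finset.card_image_of_injOn, Finset.card_range]
  intro m hm n hn h
  simpa [(Finset.mem_range.1 hm).le, (Finset.mem_range.1 hn).le] using congrArg List.length h

theorem lukasPath_eq_card_pendingVertices (hτ : IsPrefixClosed τ) {i : ℕ} (hi : i < τ.card) :
    lukasPath τ i = (pendingVertices τ (vertexAt τ i)).card := by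
  rw [lukasPath_eq_sum_lt hi,
    sum_numChildren_sub_one_eq_card_pendingVertices hτ (vertexAt_mem hi)]

theorem forall_lukasPath_le_iff_isPrefix (hτ : IsPrefixClosed τ) {i j : ℕ} (hji : j ≤ i)
    (hi : i < τ.card) :
    (∀ l, j ≤ l → l ≤ i → lukasPath τ j ≤ lukasPath τ l) ↔ vertexAt τ j <+: vertexAt τ i := by
  have hj := hji.trans_lt hi
  constructor
  · intro hmin
    by_contra hnp
    obtain ⟨y, hy, hjy, hyi, hcard⟩ := exists_card_pendingVertices_lt hτ (vertexAt_mem hi)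
      ((vertexAt_le_vertexAt_iff hj hi).2 hji) hnp
    obtain ⟨l, hl, rfl⟩ := exists_vertexAt_eq hy
    have hjl := hmin l ((vertexAt_lt_vertexAt_iff hj hl).1 hjy).le
      ((vertexAt_le_vertexAt_iff hl hi).1 hyi)
    rw [lukasPath_eq_card_pendingVertices hτ hj, lukasPath_eq_card_pendingVertices hτ hl] at hjl
    omega
  · intro hpre l hjl hli
    have hl := hli.trans_lt hi
    rw [lukasPath_eq_card_pendingVertices hτ hj, lukasPath_eq_card_pendingVertices hτ hl,
      Nat.cast_le]
    exact Finset.card_le_card <| pendingVertices_mono_of_isPrefix <| hpre.of_le_of_le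
      ((vertexAt_le_vertexAt_iff hj hl).2 hjl) ((vertexAt_le_vertexAt_iff hl hi).2 hli)

end PrefixClosed

/-- Discrete height-process formula: the generation `|u_i|` of the `i`-th vertex (in
lexicographic order) equals the number of indices `j < i` at which the Lukasiewicz path
achieves a weak minimum over `[j, i]`, i.e. `e_j ≤ e_l` for all `j ≤ l ≤ i`. -/
theorem planeTree_height_formula (τ : Finset (List ℕ)) (hτ : IsPlaneTree τ) :
    ∀ i : ℕ, i < τ.card →
      ((sortedVertices τ).getD i []).length =
        ((Finset.range i).filter
          (fun j => ∀ l : ℕ, j ≤ l → l ≤ i → lukasPath τ j ≤ lukasPath τ l)).card := by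
  intro i hi
  have hτ' := hτ.isPrefixClosed
  rw [Finset.filter_congr fun j hj =>
      forall_lukasPath_le_iff_isPrefix hτ' (Finset.mem_range.1 hj).le hi,
    card_filter_range_vertexAt hi (· <+: vertexAt τ i),
    card_filter_lt_isPrefix hτ' (vertexAt_mem hi)]
  rfl
end
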